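/- In the polynomial ring ℚ[p_{11},p_{12},p_{21},p_{22}], let q_1 = 2p_{22}(p_{11}+p_{12}) − 3p_{11}(p_{21}+p_{22}) and q_2 = 3p_{22}(p_{11}+p_{21}) − 2p_{11}(p_{12}+p_{22}). Then the ideal ⟨q_1, q_2⟩ equals the intersection ⟨p_{11}, p_{22}⟩ ∩ ⟨2p_{12}+3p_{21}, 3p_{11}p_{21}+p_{11}p_{22}+3p_{21}p_{22}⟩ ∩ ⟨2p_{12}−3p_{21}−p_{22}, p_{11}−p_{22}⟩, and each of the three ideals on the right-hand side is a prime ideal. -/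

import Mathlib

/-!
Each component is prime because it is the kernel, or a preimage, of a prime ideal under a
substitution of variables: `⟨p₁₁, p₂₂⟩` and the linear component are kernels of retractions of
the polynomial ring onto subrings in fewer variables, and substituting `p₁₂ = -3/2 p₂₁` pulls the
middle component back from the principal ideal of `h = (p₁₁ + 3p₂₁) p₂₂ + 3p₁₁p₂₁`, which is
irreducible being linear in `p₂₂` with coprime coefficients.

For the decomposition, `h = p₁₁ g + q₂` with `g = 2p₁₂ + 3p₂₁`, so an element of the intersection is
`c g + b q₂`. Since `q₂` lies in the two linear components and `g` in neither, primality puts `c`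
in both, and `g · (⟨p₁₁, p₂₂⟩ ∩ ⟨2p₁₂ − 3p₂₁ − p₂₂, p₁₁ − p₂₂⟩) ⊆ ⟨q₁, q₂⟩` by explicit identities.
-/

open MvPolynomial

/-- The variable `p₁₁` in `ℚ[p₁₁,p₁₂,p₂₁,p₂₂]`. -/
noncomputable def r11 : MvPolynomial (Fin 4) ℚ := X 0
/-- The variable `p₁₂`. -/
noncomputable def r12 : MvPolynomial (Fin 4) ℚ := X 1
/-- The variable `p₂₁`. -/
noncomputable def r21 : MvPolynomial (Fin 4) ℚ := X 2
/-- The variable `p₂₂`. -/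
noncomputable def r22 : MvPolynomial (Fin 4) ℚ := X 3

namespace MvPolynomial

variable {σ R : Type*} [CommRing R]

theorem irreducible_X_add_C_mul_X [IsDomain R] {i j : σ} (hij : i ≠ j) (c : R) :
    Irreducible (X i + C c * X j : MvPolynomial σ R) := by
  classical
  have hcoeff : coeff (Finsupp.single i 1) (X i + C c * X j : MvPolynomial σ R) = 1 := by
    simp [coeff_X, hij.symm, Finsupp.single_left_inj]
  refine irreducible_of_totalDegree_eq_one ?_ fun a ha => ?_
  · refine ((isHomogeneous_X R i).add ((isHomogeneous_X R j).C_mul c)).totalDegree fun h => ?_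
    simp [h] at hcoeff
  · exact isUnit_of_dvd_one (hcoeff ▸ ha _)

variable {g : σ → MvPolynomial σ R} {J : Ideal (MvPolynomial σ R)}

theorem sub_bind₁_mem (hJ : ∀ i, X i - g i ∈ J) (f : MvPolynomial σ R) : f - bind₁ g f ∈ J := by
  have : (Ideal.Quotient.mkₐ R J).comp (bind₁ g) = Ideal.Quotient.mkₐ R J :=
    algHom_ext fun i => by simpa [Ideal.Quotient.eq] using J.neg_mem_iff.mpr (hJ i)
  rw [← Ideal.Quotient.eq, ← Ideal.Quotient.mkₐ_eq_mk R]
  exact (congr_arg (· f) this).symm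

theorem ker_bind₁_eq (hJ : ∀ i, X i - g i ∈ J) (hker : J ≤ RingHom.ker (bind₁ g)) :
    RingHom.ker (bind₁ g) = J := by
  refine le_antisymm (fun f hf => ?_) hker
  simpa [RingHom.mem_ker.mp hf] using sub_bind₁_mem hJ f

theorem comap_bind₁_span_singleton {a b : MvPolynomial σ R}
    (ha : ∀ i, X i - g i ∈ Ideal.span {a}) (hga : bind₁ g a = 0) (hgb : bind₁ g b = b) :
    (Ideal.span {b}).comap (bind₁ g) = Ideal.span {a, b} := by
  ext f
  simp only [Ideal.mem_comap, Ideal.mem_span_singleton', Ideal.mem_span_pair]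
  constructor
  · rintro ⟨t, ht⟩
    obtain ⟨s, hs⟩ := Ideal.mem_span_singleton'.mp (sub_bind₁_mem ha f)
    exact ⟨s, t, by rw [hs, ht]; ring⟩
  · rintro ⟨s, t, rfl⟩
    exact ⟨bind₁ g t, by simp [hga, hgb]⟩

end MvPolynomial

namespace BachStravinsky

noncomputable section

local notation "ℚ[p]" => MvPolynomial (Fin 4) ℚ

def q₁ : ℚ[p] := 2 * X 3 * (X 0 + X 1) - 3 * X 0 * (X 2 + X 3)
def q₂ : ℚ[p] := 3 * X 3 * (X 0 + X 2) - 2 * X 0 * (X 1 + X 3)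

def I₁ : Ideal ℚ[p] := Ideal.span {X 0, X 3}
def I₂ : Ideal ℚ[p] :=
  Ideal.span {2 * X 1 + 3 * X 2, 3 * X 0 * X 2 + X 0 * X 3 + 3 * X 2 * X 3}
def I₃ : Ideal ℚ[p] := Ideal.span {2 * X 1 - 3 * X 2 - X 3, X 0 - X 3}

theorem I₁_eq_ker : I₁ = RingHom.ker (bind₁ (![0, X 1, X 2, 0] : Fin 4 → ℚ[p])) := by
  refine (ker_bind₁_eq (fun i => ?_) ?_).symm
  · fin_cases i <;> simp [I₁]
    all_goals exact Ideal.subset_span (by simp)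
  · simp [I₁, Ideal.span_le, Set.insert_subset_iff]

theorem I₃_eq_ker :
    I₃ = RingHom.ker (bind₁ (![2 * X 1 - 3 * X 2, X 1, X 2, 2 * X 1 - 3 * X 2] : Fin 4 → ℚ[p])) := by
  refine (ker_bind₁_eq (fun i => ?_) ?_).symm
  · fin_cases i <;> simp [I₃, Ideal.mem_span_pair]
    · exact ⟨-1, 1, by ring⟩
    · exact ⟨-1, 0, by ring⟩
  · simp [I₃, Ideal.span_le, Set.insert_subset_iff, map_ofNat]

theorem prime_quadric : Prime (3 * X 0 * X 2 + X 0 * X 3 + 3 * X 2 * X 3 : ℚ[p]) := by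
  have hℓ : Irreducible (X 0 + 3 * X 2 : ℚ[p]) := by
    simpa only [map_ofNat] using
      irreducible_X_add_C_mul_X (σ := Fin 4) (i := 0) (j := 2) (by decide) (3 : ℚ)
  have hrel : IsRelPrime (X 0 + 3 * X 2) (3 * X 0 * X 2 : ℚ[p]) :=
    hℓ.isRelPrime_iff_not_dvd.mpr fun ⟨t, ht⟩ => by
      simpa using congr_arg (eval ![3, 0, -1, 0]) ht
  have h3ℓ : (3 : Fin 4) ∉ (X 0 + 3 * X 2 : ℚ[p]).vars := by
    rw [← map_ofNat C, vars_add_of_disjoint] <;> simp [vars_C_mul, vars_X]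
  have h3 : (3 : Fin 4) ∉ (3 * X 0 * X 2 : ℚ[p]).vars := by
    rw [← map_ofNat C, mul_assoc, vars_C_mul _ three_ne_zero]
    exact fun h => by simpa [vars_X] using vars_mul _ _ h
  rw [show (3 * X 0 * X 2 + X 0 * X 3 + 3 * X 2 * X 3 : ℚ[p]) =
    (X 0 + 3 * X 2) * X 3 + 3 * X 0 * X 2 by ring]
  exact (irreducible_mul_X_add _ _ 3 hℓ.ne_zero h3ℓ h3 hrel).prime

theorem I₂_eq_comap : I₂ = (Ideal.span {3 * X 0 * X 2 + X 0 * X 3 + 3 * X 2 * X 3}).comap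
    (bind₁ (![X 0, C (-3 / 2) * X 2, X 2, X 3] : Fin 4 → ℚ[p])) := by
  refine (comap_bind₁_span_singleton (fun i => ?_) ?_ ?_).symm
  · fin_cases i <;> simp [Ideal.mem_span_singleton']
    exact ⟨C (1/2), by simp only [mul_add, ← mul_assoc, ← map_ofNat C, ← C_mul]; norm_num⟩
  · have h : (2 : ℚ[p]) * C (-3 / 2) = -3 := by
      rw [← map_ofNat C, ← C_mul, ← map_ofNat C 3, ← map_neg]; norm_num
    simp only [map_add, map_mul, map_ofNat, bind₁_X_right, Matrix.cons_val]
    linear_combination X 2 * h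
  · simp [map_ofNat]

theorem isPrime_I₁ : I₁.IsPrime := I₁_eq_ker ▸ RingHom.ker_isPrime _
theorem isPrime_I₃ : I₃.IsPrime := I₃_eq_ker ▸ RingHom.ker_isPrime _
theorem isPrime_I₂ : I₂.IsPrime :=
  I₂_eq_comap ▸ ((Ideal.span_singleton_prime prime_quadric.ne_zero).mpr prime_quadric).comap _

theorem span_q_le : Ideal.span {q₁, q₂} ≤ I₁ ⊓ I₂ ⊓ I₃ := by
  simp only [Ideal.span_le, Set.insert_subset_iff, Set.singleton_subset_iff, SetLike.mem_coe,
    Ideal.mem_inf, I₁, I₂, I₃, Ideal.mem_span_pair, q₁, q₂]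
  exact ⟨⟨⟨⟨-3 * X 2 - X 3, 2 * X 1, by ring⟩, ⟨X 3, -1, by ring⟩⟩,
      ⟨X 3, -(3 * X 2 + X 3), by ring⟩⟩,
    ⟨⟨⟨-2 * X 1 + X 3, 3 * X 2, by ring⟩, ⟨-X 0, 1, by ring⟩⟩, ⟨-X 0, -3 * X 2, by ring⟩⟩⟩

theorem mul_mem_span_q_of_mem_I₁_of_mem_I₃ {c : ℚ[p]} (h₁ : c ∈ I₁) (h₃ : c ∈ I₃) :
    c * (2 * X 1 + 3 * X 2) ∈ Ideal.span {q₁, q₂} := by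
  obtain ⟨d, e, rfl⟩ := Ideal.mem_span_pair.mp h₃
  have hm : (X 0 - X 3 : ℚ[p]) ∈ I₁ :=
    sub_mem (Ideal.subset_span (by simp)) (Ideal.subset_span (by simp))
  have hℓ : (2 * X 1 - 3 * X 2 - X 3 : ℚ[p]) ∉ I₁ := by
    rw [I₁_eq_ker, RingHom.mem_ker]
    exact fun h => by simpa [map_ofNat] using congr_arg (eval ![0, 1, 0, 0]) h
  have hd : d ∈ I₁ := by
    refine (isPrime_I₁.mem_or_mem ?_).resolve_right hℓ
    simpa using sub_mem h₁ (I₁.mul_mem_left e hm)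
  obtain ⟨u, v, rfl⟩ := Ideal.mem_span_pair.mp hd
  -- `X 0 * ℓ * g = 3 X 2 q₁ - 2 X 1 q₂`, `X 3 * ℓ * g = (2 X 1 - X 3) q₁ - (3 X 2 + X 3) q₂`
  -- and `(X 0 - X 3) * g = -(q₁ + q₂)`, where `ℓ = 2 X 1 - 3 X 2 - X 3` and `g = 2 X 1 + 3 X 2`.
  exact Ideal.mem_span_pair.mpr ⟨3 * X 2 * u + (2 * X 1 - X 3) * v - e,
    -2 * X 1 * u - (3 * X 2 + X 3) * v - e, by unfold q₁ q₂; ring⟩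

theorem span_q_eq : Ideal.span {q₁, q₂} = I₁ ⊓ I₂ ⊓ I₃ := by
  refine le_antisymm span_q_le ?_
  rintro f ⟨⟨hf₁, hf₂⟩, hf₃⟩
  obtain ⟨⟨hq₁, -⟩, hq₃⟩ := span_q_le (Ideal.subset_span (by simp) : q₂ ∈ Ideal.span {q₁, q₂})
  have hg₁ : (2 * X 1 + 3 * X 2 : ℚ[p]) ∉ I₁ := by
    rw [I₁_eq_ker, RingHom.mem_ker]
    exact fun h => by simpa [map_ofNat] using congr_arg (eval ![0, 1, 0, 0]) h
  have hg₃ : (2 * X 1 + 3 * X 2 : ℚ[p]) ∉ I₃ := by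
    rw [I₃_eq_ker, RingHom.mem_ker]
    exact fun h => by simpa [map_ofNat] using congr_arg (eval ![0, 1, 0, 0]) h
  obtain ⟨a, b, rfl⟩ := Ideal.mem_span_pair.mp hf₂
  have hf : a * (2 * X 1 + 3 * X 2) + b * (3 * X 0 * X 2 + X 0 * X 3 + 3 * X 2 * X 3) =
      (a + b * X 0) * (2 * X 1 + 3 * X 2) + b * q₂ := by unfold q₂; ring
  rw [hf] at hf₁ hf₃ ⊢
  have hc {I : Ideal ℚ[p]} (hI : I.IsPrime) (hq : q₂ ∈ I) (hg : (2 * X 1 + 3 * X 2 : ℚ[p]) ∉ I)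
      (hfI : (a + b * X 0) * (2 * X 1 + 3 * X 2) + b * q₂ ∈ I) : a + b * X 0 ∈ I :=
    (hI.mem_or_mem ((I.add_mem_iff_left (I.mul_mem_left b hq)).mp hfI)).resolve_right hg
  exact add_mem (mul_mem_span_q_of_mem_I₁_of_mem_I₃ (hc isPrime_I₁ hq₁ hg₁ hf₁)
    (hc isPrime_I₃ hq₃ hg₃ hf₃)) (Ideal.mul_mem_left _ _ (Ideal.subset_span (by simp)))

end

end BachStravinsky

/-- The ideal of the Spohn variety of the Bach-or-Stravinsky
game is the intersection of three prime ideals. -/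
theorem bach_stravinsky_primary_decomposition :
    (Ideal.span {2 * r22 * (r11 + r12) - 3 * r11 * (r21 + r22),
                 3 * r22 * (r11 + r21) - 2 * r11 * (r12 + r22)}
      = Ideal.span {r11, r22}
        ⊓ Ideal.span {2 * r12 + 3 * r21,
            3 * r11 * r21 + r11 * r22 + 3 * r21 * r22}
        ⊓ Ideal.span {2 * r12 - 3 * r21 - r22, r11 - r22}) ∧
    (Ideal.span {r11, r22} : Ideal (MvPolynomial (Fin 4) ℚ)).IsPrime ∧
    (Ideal.span {2 * r12 + 3 * r21,
        3 * r11 * r21 + r11 * r22 + 3 * r21 * r22} :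
      Ideal (MvPolynomial (Fin 4) ℚ)).IsPrime ∧
    (Ideal.span {2 * r12 - 3 * r21 - r22, r11 - r22} :
      Ideal (MvPolynomial (Fin 4) ℚ)).IsPrime :=
  ⟨BachStravinsky.span_q_eq, BachStravinsky.isPrime_I₁, BachStravinsky.isPrime_I₂,
    BachStravinsky.isPrime_I₃⟩
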